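/- arXiv:2008.09897 — 2 statements merged into one kernel-verified Lean document; each statement's English description precedes it below -/
import Mathlib

section
/- Let t ∈ (0,1), t_m := min(t, 1−t), and define h_t(θ) := (t_m − θ/(2π))_+ − t_m² for θ ∈ [0,π]. Then h_t admits the expansion h_t(θ) = 2∑_{k=1}^∞ (sin²(kπt)/(πk)²)·cos(kθ), and in particular the Rothman statistic R_{n,t} = (1/n)∑_{i,j=1}^n h_t(θ_{ij}) + t(1−t) holds with the Sobolev coefficients v_{k,1} = sin(kπt)/(πk). -/
open Finset

/-- The Rothman kernel `h_t(θ) = (t_m − θ/(2π))₊ − t_m²`, `t_m = min(t, 1−t)`. -/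
noncomputable def rothKernel (t θ : ℝ) : ℝ :=
  max (min t (1 - t) - θ / (2 * Real.pi)) 0 - (min t (1 - t)) ^ 2

namespace RothAux
open Real Set

lemma cos_series (x : ℝ) (hx : x ∈ Set.Icc (0:ℝ) 1) :
    HasSum (fun n : ℕ => 1 / (n : ℝ) ^ 2 * Real.cos (2 * π * n * x))
      (π ^ 2 * (x ^ 2 - x + 1/6)) := by
  have h := hasSum_one_div_nat_pow_mul_cos (k := 1) one_ne_zero hx
  have hB : (Polynomial.map (algebraMap ℚ ℝ) (Polynomial.bernoulli (2 * 1))).eval x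
      = x ^ 2 - x + 1/6 := by
    simp [Polynomial.bernoulli, Finset.sum_range_succ, Polynomial.eval_monomial]
    norm_num [bernoulli]
    ring
  rw [hB] at h
  have hv : ((-1:ℝ)) ^ (1 + 1) * (2 * π) ^ (2 * 1) / 2 / ((2 * 1).factorial : ℝ)
      * (x ^ 2 - x + 1/6) = π ^ 2 * (x ^ 2 - x + 1/6) := by
    have h2 : (((2 * 1).factorial : ℕ) : ℝ) = 2 := by norm_num [Nat.factorial]
    rw [h2]; ring
  rw [hv] at h
  exact h

lemma aux (t θ x₂ x₃ : ℝ)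
    (h1 : θ / (2 * π) ∈ Set.Icc (0:ℝ) 1)
    (h2 : x₂ ∈ Set.Icc (0:ℝ) 1) (h3 : x₃ ∈ Set.Icc (0:ℝ) 1)
    (hcos : ∀ n : ℕ, Real.cos (2 * π * n * x₂) + Real.cos (2 * π * n * x₃)
      = 2 * Real.cos (n * θ) * Real.cos (2 * π * n * t)) :
    HasSum (fun k : ℕ =>
        (Real.sin (((k : ℝ) + 1) * π * t)) ^ 2 / (π * ((k : ℝ) + 1)) ^ 2
          * Real.cos (((k : ℝ) + 1) * θ))
      (1/2 * ((θ/(2*π))^2 - θ/(2*π) + 1/6)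
        - 1/4 * ((x₂^2 - x₂ + 1/6) + (x₃^2 - x₃ + 1/6))) := by
  have hπ : (0:ℝ) < π := Real.pi_pos
  set u := θ / (2 * π) with hu
  set f : ℕ → ℝ := fun n =>
    1/(2*π^2) * (1 / (n : ℝ) ^ 2 * Real.cos (2 * π * n * u))
      - 1/(4*π^2) * (1 / (n : ℝ) ^ 2 * Real.cos (2 * π * n * x₂)
          + 1 / (n : ℝ) ^ 2 * Real.cos (2 * π * n * x₃)) with hf
  have H : HasSum f
      (1/(2*π^2) * (π ^ 2 * (u^2 - u + 1/6))
        - 1/(4*π^2) * (π ^ 2 * (x₂^2 - x₂ + 1/6) + π ^ 2 * (x₃^2 - x₃ + 1/6))) :=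
    ((cos_series u h1).mul_left _).sub (((cos_series x₂ h2).add (cos_series x₃ h3)).mul_left _)
  have hval : (1/(2*π^2) * (π ^ 2 * (u^2 - u + 1/6))
        - 1/(4*π^2) * (π ^ 2 * (x₂^2 - x₂ + 1/6) + π ^ 2 * (x₃^2 - x₃ + 1/6)))
      = 1/2 * (u^2 - u + 1/6) - 1/4 * ((x₂^2 - x₂ + 1/6) + (x₃^2 - x₃ + 1/6)) := by
    field_simp
  rw [hval] at H
  have hf0 : f 0 = 0 := by simp [hf]
  have H1 : HasSum (fun n : ℕ => f (n + 1))
      (1/2 * (u^2 - u + 1/6) - 1/4 * ((x₂^2 - x₂ + 1/6) + (x₃^2 - x₃ + 1/6))) := by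
    apply (hasSum_nat_add_iff 1).2
    simpa [hf0] using H
  have hfun : (fun n : ℕ => f (n + 1)) = (fun k : ℕ =>
      (Real.sin (((k : ℝ) + 1) * π * t)) ^ 2 / (π * ((k : ℝ) + 1)) ^ 2
        * Real.cos (((k : ℝ) + 1) * θ)) := by
    funext k
    have hN : ((k + 1 : ℕ) : ℝ) = (k : ℝ) + 1 := by push_cast; ring
    set N : ℝ := (k : ℝ) + 1 with hNdef
    have hN0 : N ≠ 0 := by positivity
    have hcu : Real.cos (2 * π * N * u) = Real.cos (N * θ) := by
      congr 1
      rw [hu]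
      field_simp
    have hck := hcos (k + 1)
    rw [hN] at hck
    have hsin : (Real.sin (N * π * t)) ^ 2 = 1/2 - Real.cos (2 * π * N * t) / 2 := by
      rw [Real.sin_sq_eq_half_sub]
      congr 2
      ring
    have hcomb : 1/(4*π^2) * (1 / N ^ 2 * Real.cos (2 * π * N * x₂)
        + 1 / N ^ 2 * Real.cos (2 * π * N * x₃))
        = 1/(4*π^2) * (1 / N ^ 2 * (2 * Real.cos (N * θ) * Real.cos (2 * π * N * t))) := by
      rw [← mul_add, hck]
    simp only [hf]
    rw [hN, hcu, hcomb, hsin]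
    field_simp
    ring
  rw [hfun] at H1
  exact H1

lemma rothKernel_hasSum (t θ : ℝ) (ht0 : 0 < t) (ht1 : t < 1)
    (hθ0 : 0 ≤ θ) (hθπ : θ ≤ π) :
    HasSum (fun k : ℕ =>
        (Real.sin (((k : ℝ) + 1) * π * t)) ^ 2 / (π * ((k : ℝ) + 1)) ^ 2
          * Real.cos (((k : ℝ) + 1) * θ))
      (rothKernel t θ / 2) := by
  have hπ : (0:ℝ) < π := Real.pi_pos
  set u := θ / (2 * π) with hu
  have hu0 : 0 ≤ u := by positivity
  have hu2 : u ≤ 1/2 := by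
    rw [hu, div_le_iff₀ (by positivity)]
    linarith
  have h1 : u ∈ Set.Icc (0:ℝ) 1 := ⟨hu0, by linarith⟩
  have hθeq : θ = 2 * π * u := by
    rw [hu]; field_simp
  rcases le_or_gt t u with hc | hc
  · -- case 3 : t ≤ u, x₂ = u+t, x₃ = u−t
    have ht2 : t ≤ 1/2 := le_trans hc hu2
    have h2 : u + t ∈ Set.Icc (0:ℝ) 1 := ⟨by linarith, by linarith⟩
    have h3 : u - t ∈ Set.Icc (0:ℝ) 1 := ⟨by linarith, by linarith⟩
    have hcos : ∀ n : ℕ, Real.cos (2 * π * n * (u + t)) + Real.cos (2 * π * n * (u - t))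
        = 2 * Real.cos (n * θ) * Real.cos (2 * π * n * t) := by
      intro n
      have e1 : 2 * π * n * (u + t) = n * θ + 2 * π * n * t := by rw [hθeq]; ring
      have e2 : 2 * π * n * (u - t) = n * θ - 2 * π * n * t := by rw [hθeq]; ring
      rw [e1, e2, Real.cos_add, Real.cos_sub]
      ring
    have H := aux t θ (u + t) (u - t) (by rwa [← hu]) h2 h3 hcos
    have hmin : min t (1 - t) = t := min_eq_left (by linarith)
    have hmax : max (min t (1 - t) - u) 0 = 0 := by
      rw [hmin]; exact max_eq_right (by linarith)
    have hval : (1/2 * (u^2 - u + 1/6)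
        - 1/4 * (((u+t)^2 - (u+t) + 1/6) + ((u-t)^2 - (u-t) + 1/6)))
        = rothKernel t θ / 2 := by
      rw [rothKernel, ← hu, hmax, hmin]; ring
    rw [← hu, hval] at H
    exact H
  · rcases le_or_gt (u + t) 1 with hc2 | hc2
    · -- case 1 : u < t, u + t ≤ 1, x₂ = u+t, x₃ = u−t+1
      have h2 : u + t ∈ Set.Icc (0:ℝ) 1 := ⟨by linarith, hc2⟩
      have h3 : u - t + 1 ∈ Set.Icc (0:ℝ) 1 := ⟨by linarith, by linarith⟩
      have hcos : ∀ n : ℕ,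
          Real.cos (2 * π * n * (u + t)) + Real.cos (2 * π * n * (u - t + 1))
          = 2 * Real.cos (n * θ) * Real.cos (2 * π * n * t) := by
        intro n
        have e1 : 2 * π * n * (u + t) = n * θ + 2 * π * n * t := by rw [hθeq]; ring
        have e2 : 2 * π * n * (u - t + 1) = (n * θ - 2 * π * n * t) + n * (2 * π) := by
          rw [hθeq]; ring
        rw [e1, e2, Real.cos_add_nat_mul_two_pi, Real.cos_add, Real.cos_sub]
        ring
      have H := aux t θ (u + t) (u - t + 1) (by rwa [← hu]) h2 h3 hcos
      have hmax : max (min t (1 - t) - u) 0 = min t (1 - t) - u := by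
        rcases le_total t (1 - t) with h | h
        · rw [min_eq_left h]; exact max_eq_left (by linarith)
        · rw [min_eq_right h]; exact max_eq_left (by linarith)
      have hval : (1/2 * (u^2 - u + 1/6)
          - 1/4 * (((u+t)^2 - (u+t) + 1/6) + ((u-t+1)^2 - (u-t+1) + 1/6)))
          = rothKernel t θ / 2 := by
        rw [rothKernel, ← hu, hmax]
        rcases le_total t (1 - t) with h | h
        · rw [min_eq_left h]; ring
        · rw [min_eq_right h]; ring
      rw [← hu, hval] at H
      exact H
    · -- case 2 : u < t, u + t > 1, x₂ = u+t−1, x₃ = u−t+1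
      have ht2 : 1/2 < t := by linarith
      have h2 : u + t - 1 ∈ Set.Icc (0:ℝ) 1 := ⟨by linarith, by linarith⟩
      have h3 : u - t + 1 ∈ Set.Icc (0:ℝ) 1 := ⟨by linarith, by linarith⟩
      have hcos : ∀ n : ℕ,
          Real.cos (2 * π * n * (u + t - 1)) + Real.cos (2 * π * n * (u - t + 1))
          = 2 * Real.cos (n * θ) * Real.cos (2 * π * n * t) := by
        intro n
        have e1 : 2 * π * n * (u + t - 1) = (n * θ + 2 * π * n * t) - n * (2 * π) := by
          rw [hθeq]; ring
        have e2 : 2 * π * n * (u - t + 1) = (n * θ - 2 * π * n * t) + n * (2 * π) := by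
          rw [hθeq]; ring
        rw [e1, e2, Real.cos_add_nat_mul_two_pi, Real.cos_sub_nat_mul_two_pi,
          Real.cos_add, Real.cos_sub]
        ring
      have H := aux t θ (u + t - 1) (u - t + 1) (by rwa [← hu]) h2 h3 hcos
      have hmin : min t (1 - t) = 1 - t := min_eq_right (by linarith)
      have hmax : max (min t (1 - t) - u) 0 = 0 := by
        rw [hmin]; exact max_eq_right (by linarith)
      have hval : (1/2 * (u^2 - u + 1/6)
          - 1/4 * (((u+t-1)^2 - (u+t-1) + 1/6) + ((u-t+1)^2 - (u-t+1) + 1/6)))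
          = rothKernel t θ / 2 := by
        rw [rothKernel, ← hu, hmax, hmin]; ring
      rw [← hu, hval] at H
      exact H

end RothAux

theorem rothman_expansion (t : ℝ) (ht0 : 0 < t) (ht1 : t < 1) :
    (∀ θ ∈ Set.Icc 0 Real.pi,
      rothKernel t θ
        = 2 * ∑' k : ℕ,
            (Real.sin (((k : ℝ) + 1) * Real.pi * t)) ^ 2 / (Real.pi * ((k : ℝ) + 1)) ^ 2
              * Real.cos (((k : ℝ) + 1) * θ))
    ∧ (∀ (n : ℕ), 1 ≤ n → ∀ Θ : Fin n → ℝ,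
      -- the Rothman statistic in kernel form equals its Sobolev form with
      -- coefficients `v_{k,1} = sin(kπt)/(πk)`, where
      -- `θ_{ij} = arccos(cos(Θ_i − Θ_j))` is the shortest angular distance
      (1 / (n : ℝ)) * ∑ i : Fin n, ∑ j : Fin n,
          rothKernel t (Real.arccos (Real.cos (Θ i - Θ j))) + t * (1 - t)
        = t * (1 - t)
          + (2 / (n : ℝ)) * ∑ i : Fin n, ∑ j : Fin n,
              ∑' k : ℕ,
                (Real.sin (((k : ℝ) + 1) * Real.pi * t) / (Real.pi * ((k : ℝ) + 1))) ^ 2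
                  * Real.cos (((k : ℝ) + 1) * Real.arccos (Real.cos (Θ i - Θ j)))) := by
  have key : ∀ θ : ℝ, 0 ≤ θ → θ ≤ Real.pi →
      rothKernel t θ
        = 2 * ∑' k : ℕ,
            (Real.sin (((k : ℝ) + 1) * Real.pi * t)) ^ 2 / (Real.pi * ((k : ℝ) + 1)) ^ 2
              * Real.cos (((k : ℝ) + 1) * θ) := by
    intro θ h0 hπ
    rw [(RothAux.rothKernel_hasSum t θ ht0 ht1 h0 hπ).tsum_eq]
    ring
  constructor
  · intro θ hθ
    exact key θ hθ.1 hθ.2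
  · intro n hn Θ
    have hterm : ∀ i j : Fin n,
        rothKernel t (Real.arccos (Real.cos (Θ i - Θ j)))
          = 2 * ∑' k : ℕ,
              (Real.sin (((k : ℝ) + 1) * Real.pi * t) / (Real.pi * ((k : ℝ) + 1))) ^ 2
                * Real.cos (((k : ℝ) + 1) * Real.arccos (Real.cos (Θ i - Θ j))) := by
      intro i j
      rw [key _ (Real.arccos_nonneg _) (Real.arccos_le_pi _)]
      congr 1
      apply tsum_congr
      intro k
      rw [div_pow]
    have hsum : ∑ i : Fin n, ∑ j : Fin n,
        rothKernel t (Real.arccos (Real.cos (Θ i - Θ j)))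
        = 2 * ∑ i : Fin n, ∑ j : Fin n,
            ∑' k : ℕ,
              (Real.sin (((k : ℝ) + 1) * Real.pi * t) / (Real.pi * ((k : ℝ) + 1))) ^ 2
                * Real.cos (((k : ℝ) + 1) * Real.arccos (Real.cos (Θ i - Θ j))) := by
      rw [Finset.mul_sum]
      apply Finset.sum_congr rfl
      intro i _
      rw [Finset.mul_sum]
      exact Finset.sum_congr rfl fun j _ => hterm i j
    rw [hsum]
    ring
end

section
/- For q = 2 and k ≥ 1, the Gegenbauer coefficient of the Cramér–von Mises kernel ψ_2^{CvM}(θ) = 1/2 − (1/4)sin(θ/2) in the basis C_k^{1/2}(cos θ) (Legendre polynomials) equals b_{k,2}^{CvM} = 1/(2(2k−1)(2k+3)). That is, (1/c_{k,2})∫_0^π (1/2 − (1/4)sin(θ/2))·P_k(cos θ)·sin(θ) dθ = 1/(2(2k−1)(2k+3)), where P_k is the k-th Legendre polynomial and c_{k,2} = 2/(2k+1). -/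
/-- The Gegenbauer polynomial `C_n^λ`, defined by the standard three-term recurrence;
`C_k^{1/2}` is the Legendre polynomial `P_k`. -/
noncomputable def gegenbauer (lam : ℝ) : ℕ → ℝ → ℝ
  | 0, _ => 1
  | 1, x => 2 * lam * x
  | (n + 2), x =>
      (2 * ((n : ℝ) + 1 + lam) * x * gegenbauer lam (n + 1) x
        - ((n : ℝ) + 2 * lam) * gegenbauer lam n x) / ((n : ℝ) + 2)

noncomputable abbrev Pg : ℕ → ℝ → ℝ := gegenbauer (1/2)

lemma Pg_zero (x : ℝ) : Pg 0 x = 1 := rfl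
lemma Pg_one (x : ℝ) : Pg 1 x = x := by simp [gegenbauer]
lemma Pg_rec (n : ℕ) (x : ℝ) :
    Pg (n+2) x = ((2*(n:ℝ)+3)*x*Pg (n+1) x - ((n:ℝ)+1)*Pg n x)/((n:ℝ)+2) := by
  show gegenbauer _ _ _ = _
  rw [gegenbauer]; ring_nf

lemma Pg_rec' (n : ℕ) (x : ℝ) :
    ((n:ℝ)+2) * Pg (n+2) x = (2*(n:ℝ)+3)*x*Pg (n+1) x - ((n:ℝ)+1)*Pg n x := by
  rw [Pg_rec]; field_simp

noncomputable def Qg : ℕ → ℝ → ℝ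
  | 0, _ => 0
  | 1, _ => 1
  | (n+2), x => ((2*(n:ℝ)+3) * (Pg (n+1) x + x * Qg (n+1) x) - ((n:ℝ)+1) * Qg n x) / ((n:ℝ)+2)

lemma Qg_zero (x : ℝ) : Qg 0 x = 0 := rfl
lemma Qg_one (x : ℝ) : Qg 1 x = 1 := rfl
lemma Qg_rec (n : ℕ) (x : ℝ) :
    ((n:ℝ)+2) * Qg (n+2) x
      = (2*(n:ℝ)+3) * (Pg (n+1) x + x * Qg (n+1) x) - ((n:ℝ)+1) * Qg n x := by
  rw [Qg]; field_simp

lemma Pg_hasDerivAt : ∀ n x, HasDerivAt (Pg n) (Qg n x) x := by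
  intro n
  induction n using Nat.strong_induction_on with
  | _ n ih =>
    match n with
    | 0 =>
      intro x
      have h : Pg 0 = fun _ : ℝ => (1:ℝ) := funext fun y => Pg_zero y
      rw [h, Qg]; exact hasDerivAt_const x 1
    | 1 =>
      intro x
      have h : Pg 1 = fun y : ℝ => y := funext fun y => Pg_one y
      rw [h, Qg]; exact hasDerivAt_id x
    | (n+2) =>
      intro x
      have h : Pg (n+2) = fun y : ℝ =>
          ((2*(n:ℝ)+3)*y*Pg (n+1) y - ((n:ℝ)+1)*Pg n y)/((n:ℝ)+2) :=
        funext fun y => Pg_rec n y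
      rw [h]
      have h1 : HasDerivAt (fun y : ℝ => (2*(n:ℝ)+3)*y*Pg (n+1) y)
          ((2*(n:ℝ)+3)*(Pg (n+1) x + x * Qg (n+1) x)) x := by
        have := ((hasDerivAt_id x).mul (ih (n+1) (by omega) x)).const_mul (2*(n:ℝ)+3)
        exact (this.congr_deriv (by simp only [id_eq]; ring)).congr_of_eventuallyEq
          (Filter.Eventually.of_forall fun y => by simp only [Pi.mul_apply, id_eq]; ring)
      have h2 := (ih n (by omega) x).const_mul ((n:ℝ)+1)
      have h3 := ((h1.sub h2).div_const ((n:ℝ)+2))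
      exact h3.congr_deriv (by rw [Qg])

-- S(m): part1 and part2 identities at index m+1
lemma Pg_S (m : ℕ) (x : ℝ) :
    Qg m x = x * Qg (m+1) x - ((m:ℝ)+1) * Pg (m+1) x ∧
    (1-x^2) * Qg (m+1) x = ((m:ℝ)+1) * (Pg m x - x * Pg (m+1) x) := by
  induction m with
  | zero => constructor <;> simp [Qg_zero, Qg_one, Pg_zero, Pg_one] <;> ring
  | succ m ih =>
    obtain ⟨h1, h2⟩ := ih
    have hne : ((m:ℝ)+2) ≠ 0 := by positivity
    have hD1 : Qg (m+2) x = ((m:ℝ)+2) * Pg (m+1) x + x * Qg (m+1) x := by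
      have hr := Qg_rec m x
      apply mul_left_cancel₀ hne
      linear_combination hr - ((m:ℝ)+1) * h1
    have hrec := Pg_rec' m x
    constructor
    · push_cast
      linear_combination -x * hD1 + hrec + h2
    · push_cast
      linear_combination (1-x^2) * hD1 + x * hrec + x * h2

lemma Qg_diff (m : ℕ) (x : ℝ) :
    Qg (m+2) x - Qg m x = (2*(m:ℝ)+3) * Pg (m+1) x := by
  obtain ⟨h1, h2⟩ := Pg_S m x
  have hne : ((m:ℝ)+2) ≠ 0 := by positivity
  have hD1 : Qg (m+2) x = ((m:ℝ)+2) * Pg (m+1) x + x * Qg (m+1) x := by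
    have hr := Qg_rec m x
    apply mul_left_cancel₀ hne
    linear_combination hr - ((m:ℝ)+1) * h1
  linear_combination hD1 - h1

lemma Pg_at_one : ∀ n, Pg n 1 = 1 := by
  intro n
  induction n using Nat.strong_induction_on with
  | _ n ih =>
    match n with
    | 0 => exact Pg_zero 1
    | 1 => exact Pg_one 1
    | (n+2) =>
      have h1 := ih (n+1) (by omega)
      have h0 := ih n (by omega)
      rw [Pg_rec, h1, h0]
      field_simp; ring

lemma Pg_at_neg_one : ∀ n, Pg n (-1) = (-1)^n := by
  intro n
  induction n using Nat.strong_induction_on with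
  | _ n ih =>
    match n with
    | 0 => simpa using Pg_zero (-1)
    | 1 => simpa using Pg_one (-1)
    | (n+2) =>
      have h1 := ih (n+1) (by omega)
      have h0 := ih n (by omega)
      rw [Pg_rec, h1, h0]
      have hne : ((n:ℝ)+2) ≠ 0 := by positivity
      field_simp
      ring

lemma Pg_cont (n : ℕ) : Continuous (Pg n) :=
  Differentiable.continuous (fun x => (Pg_hasDerivAt n x).differentiableAt)

lemma inner_hasDerivAt (s : ℝ) : HasDerivAt (fun s : ℝ => 1 - 2*s^2) (-4*s) s := by
  have h := ((hasDerivAt_pow 2 s).const_mul 2).const_sub 1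
  exact h.congr_deriv (by push_cast; ring)

lemma comp_hasDerivAt (n : ℕ) (s : ℝ) :
    HasDerivAt (fun s : ℝ => Pg n (1 - 2*s^2)) (Qg n (1-2*s^2) * (-4*s)) s :=
  (Pg_hasDerivAt n (1-2*s^2)).comp s (inner_hasDerivAt s)

lemma comp_cont (n : ℕ) : Continuous (fun s : ℝ => Pg n (1 - 2*s^2)) :=
  (Pg_cont n).comp (by continuity)

noncomputable def Mg (k : ℕ) : ℝ := ∫ s in (0:ℝ)..1, Pg k (1 - 2*s^2)
noncomputable def Ag (k : ℕ) : ℝ := ∫ s in (0:ℝ)..1, s^2 * Pg k (1 - 2*s^2)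

lemma g_hasDerivAt (m : ℕ) (s : ℝ) :
    HasDerivAt (fun s : ℝ => Pg (m+2) (1 - 2*s^2) - Pg m (1 - 2*s^2))
      (-4*(2*(m:ℝ)+3) * (s * Pg (m+1) (1 - 2*s^2))) s := by
  have h := (comp_hasDerivAt (m+2) s).sub (comp_hasDerivAt m s)
  refine h.congr_deriv ?_
  have := Qg_diff m (1 - 2*s^2)
  linear_combination (-4*s) * this

lemma g_boundary (m : ℕ) :
    (Pg (m+2) (1 - 2*(1:ℝ)^2) - Pg m (1 - 2*(1:ℝ)^2))
      - (Pg (m+2) (1 - 2*(0:ℝ)^2) - Pg m (1 - 2*(0:ℝ)^2)) = 0 := by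
  norm_num [Pg_at_one, Pg_at_neg_one, pow_succ]

lemma cneg_ne (m : ℕ) : (-4*(2*(m:ℝ)+3)) ≠ 0 := by
  have hpos : (0:ℝ) < 4*(2*(m:ℝ)+3) := by positivity
  intro h; nlinarith

lemma N_eq (m : ℕ) : ∫ s in (0:ℝ)..1, s * Pg (m+1) (1 - 2*s^2) = 0 := by
  have hc : Continuous (fun s : ℝ => -4*(2*(m:ℝ)+3) * (s * Pg (m+1) (1 - 2*s^2))) := by
    have := comp_cont (m+1); fun_prop
  have hint : IntervalIntegrable (fun s : ℝ => -4*(2*(m:ℝ)+3) * (s * Pg (m+1) (1 - 2*s^2)))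
      MeasureTheory.volume 0 1 := hc.intervalIntegrable 0 1
  have h := intervalIntegral.integral_eq_sub_of_hasDerivAt
    (f := fun s : ℝ => Pg (m+2) (1 - 2*s^2) - Pg m (1 - 2*s^2))
    (fun s _ => g_hasDerivAt m s) hint
  rw [intervalIntegral.integral_const_mul] at h
  have hb : (fun s : ℝ => Pg (m+2) (1 - 2*s^2) - Pg m (1 - 2*s^2)) 1
      - (fun s : ℝ => Pg (m+2) (1 - 2*s^2) - Pg m (1 - 2*s^2)) 0 = 0 := by
    show (Pg (m+2) (1 - 2*(1:ℝ)^2) - Pg m (1 - 2*(1:ℝ)^2))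
      - (Pg (m+2) (1 - 2*(0:ℝ)^2) - Pg m (1 - 2*(0:ℝ)^2)) = 0
    exact g_boundary m
  rw [hb] at h
  exact (mul_eq_zero.mp h).resolve_left (cneg_ne m)

lemma Ag_rel (m : ℕ) : 4*(2*(m:ℝ)+3) * Ag (m+1) = Mg (m+2) - Mg m := by
  -- IBP: ∫ s * g'(s) = [s g] - ∫ g
  have hu : ∀ s ∈ Set.uIcc (0:ℝ) 1, HasDerivAt (fun y : ℝ => y) (1:ℝ) s :=
    fun s _ => hasDerivAt_id s
  have hv : ∀ s ∈ Set.uIcc (0:ℝ) 1,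
      HasDerivAt (fun s : ℝ => Pg (m+2) (1 - 2*s^2) - Pg m (1 - 2*s^2))
        (-4*(2*(m:ℝ)+3) * (s * Pg (m+1) (1 - 2*s^2))) s := fun s _ => g_hasDerivAt m s
  have hcv : Continuous (fun s : ℝ => -4*(2*(m:ℝ)+3) * (s * Pg (m+1) (1 - 2*s^2))) := by
    have := comp_cont (m+1); fun_prop
  have hcg : Continuous (fun s : ℝ => Pg (m+2) (1 - 2*s^2) - Pg m (1 - 2*s^2)) :=
    (comp_cont (m+2)).sub (comp_cont m)
  have h := intervalIntegral.integral_mul_deriv_eq_deriv_mul hu hv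
    ((continuous_const).intervalIntegrable 0 1) (hcv.intervalIntegrable 0 1)
  -- h : ∫ s * v' = 1 * v 1 - 0 * v 0 - ∫ 1 * v
  have hb1 : (Pg (m+2) (1 - 2*(1:ℝ)^2) - Pg m (1 - 2*(1:ℝ)^2)) = 0 := by
    norm_num [Pg_at_one, Pg_at_neg_one, pow_succ]
  have hL : ∫ s in (0:ℝ)..1, s * (-4*(2*(m:ℝ)+3) * (s * Pg (m+1) (1 - 2*s^2)))
      = -4*(2*(m:ℝ)+3) * Ag (m+1) := by
    rw [show (fun s : ℝ => s * (-4*(2*(m:ℝ)+3) * (s * Pg (m+1) (1 - 2*s^2))))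
        = (fun s : ℝ => -4*(2*(m:ℝ)+3) * (s^2 * Pg (m+1) (1 - 2*s^2))) from
      funext fun s => by ring]
    rw [intervalIntegral.integral_const_mul]; rfl
  have hR : ∫ s in (0:ℝ)..1, (1:ℝ) * (Pg (m+2) (1 - 2*s^2) - Pg m (1 - 2*s^2))
      = Mg (m+2) - Mg m := by
    simp only [one_mul]
    rw [intervalIntegral.integral_sub ((comp_cont (m+2)).intervalIntegrable 0 1)
      ((comp_cont m).intervalIntegrable 0 1)]
    rfl
  rw [hL, hR] at h
  have hb : (1:ℝ) * (Pg (m+2) (1 - 2*(1:ℝ)^2) - Pg m (1 - 2*(1:ℝ)^2))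
      - (0:ℝ) * (Pg (m+2) (1 - 2*(0:ℝ)^2) - Pg m (1 - 2*(0:ℝ)^2)) = 0 := by
    rw [hb1]; ring
  rw [show ((1:ℝ) * ((fun s : ℝ => Pg (m+2) (1 - 2*s^2) - Pg m (1 - 2*s^2)) 1)
      - (0:ℝ) * ((fun s : ℝ => Pg (m+2) (1 - 2*s^2) - Pg m (1 - 2*s^2)) 0)) = 0 from hb] at h
  linarith [h]

lemma Mg_rec (m : ℕ) : ((m:ℝ)+2) * Mg (m+2)
    = (2*(m:ℝ)+3)*Mg (m+1) - 2*(2*(m:ℝ)+3)*Ag (m+1) - ((m:ℝ)+1)*Mg m := by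
  have hpt : (fun s : ℝ => Pg (m+2) (1-2*s^2))
      = fun s : ℝ => ((2*(m:ℝ)+3)*Pg (m+1) (1-2*s^2)
          - 2*(2*(m:ℝ)+3)*(s^2*Pg (m+1) (1-2*s^2)) - ((m:ℝ)+1)*Pg m (1-2*s^2))/((m:ℝ)+2) := by
    funext s; rw [Pg_rec]; ring
  have h1 : Continuous fun s : ℝ => (2*(m:ℝ)+3)*Pg (m+1) (1-2*s^2) := by
    have := comp_cont (m+1); fun_prop
  have h2 : Continuous fun s : ℝ => 2*(2*(m:ℝ)+3)*(s^2*Pg (m+1) (1-2*s^2)) := by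
    have := comp_cont (m+1); fun_prop
  have h3 : Continuous fun s : ℝ => ((m:ℝ)+1)*Pg m (1-2*s^2) := by
    have := comp_cont m; fun_prop
  have hne : ((m:ℝ)+2) ≠ 0 := by positivity
  have : Mg (m+2) = ((2*(m:ℝ)+3)*Mg (m+1) - 2*(2*(m:ℝ)+3)*Ag (m+1)
      - ((m:ℝ)+1)*Mg m)/((m:ℝ)+2) := by
    show (∫ s in (0:ℝ)..1, Pg (m+2) (1-2*s^2)) = _
    rw [hpt]
    rw [intervalIntegral.integral_div]
    rw [intervalIntegral.integral_sub (by exact (h1.sub h2).intervalIntegrable 0 1 :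
      IntervalIntegrable (fun s : ℝ => (2*(m:ℝ)+3)*Pg (m+1) (1-2*s^2)
        - 2*(2*(m:ℝ)+3)*(s^2*Pg (m+1) (1-2*s^2))) MeasureTheory.volume 0 1)
      (h3.intervalIntegrable 0 1)]
    rw [intervalIntegral.integral_sub (h1.intervalIntegrable 0 1) (h2.intervalIntegrable 0 1)]
    rw [intervalIntegral.integral_const_mul, intervalIntegral.integral_const_mul,
      intervalIntegral.integral_const_mul]
    rfl
  rw [this]; field_simp

lemma Mg_zero : Mg 0 = 1 := by
  have : (fun s : ℝ => Pg 0 (1-2*s^2)) = fun _ : ℝ => (1:ℝ) := funext fun s => Pg_zero _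
  show (∫ s in (0:ℝ)..1, Pg 0 (1-2*s^2)) = 1
  rw [this]; simp

lemma Mg_one : Mg 1 = 1/3 := by
  have : (fun s : ℝ => Pg 1 (1-2*s^2)) = fun s : ℝ => 1 - 2*s^2 := funext fun s => Pg_one _
  show (∫ s in (0:ℝ)..1, Pg 1 (1-2*s^2)) = 1/3
  rw [this]
  have hc : Continuous fun s : ℝ => 2*s^2 := by fun_prop
  rw [intervalIntegral.integral_sub (continuous_const.intervalIntegrable 0 1)
    (hc.intervalIntegrable 0 1)]
  rw [intervalIntegral.integral_const_mul, integral_pow]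
  simp
  norm_num

lemma Mg_eq : ∀ k, Mg k = 1/(2*(k:ℝ)+1) := by
  intro k
  induction k using Nat.strong_induction_on with
  | _ k ih =>
    match k with
    | 0 => simpa using Mg_zero
    | 1 => rw [Mg_one]; norm_num
    | (m+2) =>
      have hM0 := ih m (by omega)
      have hM1 := ih (m+1) (by omega)
      have hM0' : (2*(m:ℝ)+1) * Mg m = 1 := by
        rw [hM0]; have : (2*(m:ℝ)+1) ≠ 0 := by positivity
        field_simp
      have hM1' : (2*(m:ℝ)+3) * Mg (m+1) = 1 := by
        rw [hM1]; push_cast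
        have : (2*(m:ℝ)+3) ≠ 0 := by positivity
        field_simp; ring
      have h1 := Mg_rec m
      have h2 := Ag_rel m
      have key : (2*(m:ℝ)+5) * Mg (m+2) = 1 := by
        linear_combination 2*h1 - h2 + 2*hM1' - hM0'
      have h5 : (2*(m:ℝ)+5) ≠ 0 := by positivity
      push_cast
      rw [eq_div_iff (by positivity)]
      linear_combination key

lemma Ag_eq (m : ℕ) :
    Ag (m+1) = -(1/((2*(m:ℝ)+1)*(2*(m:ℝ)+3)*(2*(m:ℝ)+5))) := by
  have h := Ag_rel m
  rw [Mg_eq, Mg_eq] at h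
  push_cast at h
  have h1 : (2*(m:ℝ)+1) ≠ 0 := by positivity
  have h3 : (2*(m:ℝ)+3) ≠ 0 := by positivity
  have h5 : (2*(m:ℝ)+5) ≠ 0 := by positivity
  field_simp at h ⊢
  linarith

lemma subst_half (f : ℝ → ℝ) (hf : Continuous f) :
    (∫ θ in (0:ℝ)..Real.pi, (Real.cos (θ/2)/2) * f (Real.sin (θ/2)))
      = ∫ s in (0:ℝ)..1, f s := by
  have hd : ∀ θ ∈ Set.uIcc (0:ℝ) Real.pi,
      HasDerivAt (fun θ : ℝ => Real.sin (θ/2)) (Real.cos (θ/2)/2) θ := by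
    intro θ _
    have h := (Real.hasDerivAt_sin (θ/2)).comp θ ((hasDerivAt_id θ).div_const 2)
    exact h.congr_deriv (by ring)
  have hcont : ContinuousOn (fun θ : ℝ => Real.cos (θ/2)/2) (Set.uIcc 0 Real.pi) := by
    fun_prop
  have h := intervalIntegral.integral_comp_smul_deriv hd hcont hf
  simp only [Function.comp, smul_eq_mul] at h
  rw [h]
  norm_num [Real.sin_pi_div_two]

/-- For `q = 2` and `k ≥ 1`, the Legendre coefficient of the Cramér–von Mises kernel
`ψ₂^{CvM}(θ) = 1/2 − sin(θ/2)/4` equals `1/(2(2k−1)(2k+3))`: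
`(1/c_{k,2})∫₀^π (1/2 − sin(θ/2)/4)·P_k(cos θ)·sin θ dθ = 1/(2(2k−1)(2k+3))`,
with `c_{k,2} = 2/(2k+1)`. -/
theorem cvm_legendre_coefficient (k : ℕ) (hk : 1 ≤ k) :
    ((2 : ℝ) / (2 * (k : ℝ) + 1))⁻¹ *
        ∫ θ in (0 : ℝ)..Real.pi,
          (1/2 - (1/4) * Real.sin (θ/2)) * gegenbauer (1/2) k (Real.cos θ) * Real.sin θ
      = 1 / (2 * (2 * (k : ℝ) - 1) * (2 * (k : ℝ) + 3)) := by
  obtain ⟨m, rfl⟩ : ∃ m, k = m + 1 := ⟨k - 1, by omega⟩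
  set f : ℝ → ℝ := fun s => (2*s - s^2) * Pg (m+1) (1 - 2*s^2) with hf_def
  have hf : Continuous f := by have := comp_cont (m+1); fun_prop
  have hpt : ∀ θ : ℝ, (1/2 - (1/4) * Real.sin (θ/2)) * gegenbauer (1/2) (m+1) (Real.cos θ)
      * Real.sin θ = (Real.cos (θ/2)/2) * f (Real.sin (θ/2)) := by
    intro θ
    have h2 : 2*(θ/2) = θ := by ring
    have hcos : Real.cos θ = 1 - 2*Real.sin (θ/2)^2 := by
      have hc := Real.cos_two_mul (θ/2)
      rw [h2] at hc
      have hp := Real.sin_sq_add_cos_sq (θ/2)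
      nlinarith [hc, hp]
    have hsin : Real.sin θ = 2*Real.sin (θ/2)*Real.cos (θ/2) := by
      have hs := Real.sin_two_mul (θ/2)
      rw [h2] at hs
      linarith [hs]
    rw [hcos, hsin, hf_def]
    show (1/2 - 1/4 * Real.sin (θ/2)) * Pg (m+1) (1 - 2*Real.sin (θ/2)^2)
        * (2*Real.sin (θ/2)*Real.cos (θ/2)) = _
    ring
  rw [intervalIntegral.integral_congr (fun θ _ => hpt θ)]
  rw [subst_half f hf]
  have hsplit : (∫ s in (0:ℝ)..1, f s)
      = 2 * (∫ s in (0:ℝ)..1, s * Pg (m+1) (1 - 2*s^2)) - Ag (m+1) := by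
    have hc1 : Continuous fun s : ℝ => 2 * (s * Pg (m+1) (1 - 2*s^2)) := by
      have := comp_cont (m+1); fun_prop
    have hc2 : Continuous fun s : ℝ => s^2 * Pg (m+1) (1 - 2*s^2) := by
      have := comp_cont (m+1); fun_prop
    have : f = fun s : ℝ => 2 * (s * Pg (m+1) (1 - 2*s^2)) - s^2 * Pg (m+1) (1 - 2*s^2) := by
      funext s; rw [hf_def]; ring
    rw [this, intervalIntegral.integral_sub (hc1.intervalIntegrable 0 1)
      (hc2.intervalIntegrable 0 1), intervalIntegral.integral_const_mul]
    rfl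
  rw [hsplit, N_eq, Ag_eq]
  have h1 : (2*(m:ℝ)+1) ≠ 0 := by positivity
  have h3 : (2*(m:ℝ)+3) ≠ 0 := by positivity
  have h5 : (2*(m:ℝ)+5) ≠ 0 := by positivity
  push_cast
  have hm : (0:ℝ) ≤ (m:ℝ) := Nat.cast_nonneg m
  have ha : 2*((m:ℝ)+1) - 1 ≠ 0 := ne_of_gt (by nlinarith)
  have hb : 2*((m:ℝ)+1) + 3 ≠ 0 := ne_of_gt (by nlinarith)
  have hc : 2*((m:ℝ)+1) + 1 ≠ 0 := ne_of_gt (by nlinarith)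
  field_simp
  ring
end
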